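/- Let 𝔛=(X,{R_i}_{i=0}^d) be a commutative association scheme generated by a non-symmetric relation R_1 satisfying R_1^2 ⊆ {R_1,R_{1*},R_2}, R_1R_{1*} ⊆ {R_0,R_1,R_{1*},R_2,R_{2*}}, and 2 ∉ {1*,2*}, and set k := k_1 = k_2, I := {i : R_i ∈ R_1^2} and J := {i : R_i ∈ R_1R_{1*}}. Then Σ_{α ∈ I} (p_{1,1}^α)^2 = k + 2·Σ_{β ∈ J∩{1,2}} (p_{1,1*}^β)^2. -/
import Mathlib


/-- A `d`-class association scheme on a finite set `X`, with relations
`R 0, …, R d`, transposition map `star` (so that `Rᵢᵀ = R (star i)`) and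
intersection numbers `p i j l = |Rᵢ(x) ∩ R_{j*}(y)|` for `(x,y) ∈ R l`. -/
structure AssocScheme (X : Type*) [Fintype X] (d : ℕ) where
  R : Fin (d + 1) → X → X → Prop
  star : Fin (d + 1) → Fin (d + 1)
  p : Fin (d + 1) → Fin (d + 1) → Fin (d + 1) → ℕ
  R_nonempty : ∀ i, ∃ x y, R i x y
  R_diag : ∀ x y, R 0 x y ↔ x = y
  R_partition : ∀ x y, ∃! i, R i x y
  R_star : ∀ i x y, R i x y ↔ R (star i) y x
  p_count : ∀ i j l x y, R l x y →
    p i j l = Set.ncard {z | R i x z ∧ R (star j) y z}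

namespace AssocScheme

variable {X : Type*} [Fintype X] {d : ℕ}

/-- The valency `kᵢ = p_{i,i*}^0` of the relation `Rᵢ`. -/
def valency (A : AssocScheme X d) (i : Fin (d + 1)) : ℕ := A.p i (A.star i) 0

/-- A scheme is commutative if `p_{i,j}^l = p_{j,i}^l` for all `i,j,l`. -/
def IsCommutative (A : AssocScheme X d) : Prop := ∀ i j l, A.p i j l = A.p j i l

/-- The index set of the complex product `Rᵢ Rⱼ`, i.e. `{l | p_{i,j}^l ≠ 0}`. -/
def prodIdx (A : AssocScheme X d) (i j : Fin (d + 1)) : Set (Fin (d + 1)) :=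
  {l | A.p i j l ≠ 0}

/-- A set of relations (given by its index set) is closed if it is closed
under `R_{i*} R_j`. -/
def IsClosed (A : AssocScheme X d) (F : Set (Fin (d + 1))) : Prop :=
  ∀ i ∈ F, ∀ j ∈ F, ∀ l, A.p (A.star i) j l ≠ 0 → l ∈ F

/-- `Rⱼ` generates the scheme if the smallest closed subset containing `Rⱼ`
consists of all relations. -/
def Generates (A : AssocScheme X d) (j : Fin (d + 1)) : Prop :=
  ∀ F : Set (Fin (d + 1)), A.IsClosed F → j ∈ F → F = Set.univ

end AssocScheme

namespace AssocScheme

open scoped Classical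

variable {X : Type*} [Fintype X] {d : ℕ} (A : AssocScheme X d)

include A in
lemma nonemptyX : Nonempty X := by
  obtain ⟨x, y, -⟩ := A.R_nonempty 0; exact ⟨x⟩

lemma R_unique {i j : Fin (d+1)} {x y : X} (hi : A.R i x y) (hj : A.R j x y) : i = j := by
  obtain ⟨l, -, hl⟩ := A.R_partition x y
  rw [hl i hi, hl j hj]

lemma star_star (i : Fin (d+1)) : A.star (A.star i) = i := by
  obtain ⟨x, y, h⟩ := A.R_nonempty i
  exact A.R_unique ((A.R_star (A.star i) y x).mp ((A.R_star i x y).mp h)) h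

lemma star_zero : A.star 0 = 0 := by
  obtain ⟨x⟩ := A.nonemptyX
  have h0 : A.R 0 x x := (A.R_diag x x).mpr rfl
  exact A.R_unique ((A.R_star 0 x x).mp h0) h0

noncomputable def adj (i : Fin (d+1)) : Matrix X X ℕ :=
  Matrix.of fun x y => if A.R i x y then 1 else 0

lemma adj_apply (i : Fin (d+1)) (x y : X) :
    A.adj i x y = if A.R i x y then 1 else 0 := rfl

lemma eval_count {l : Fin (d+1)} {x y : X} (h : A.R l x y) (i j : Fin (d+1)) :
    (A.adj i * A.adj j) x y = A.p i j l := by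
  rw [A.p_count i j l x y h]
  have hset : {z | A.R i x z ∧ A.R (A.star j) y z} = {z | A.R i x z ∧ A.R j z y} := by
    ext z
    simp only [Set.mem_setOf_eq, and_congr_right_iff]
    intro _
    constructor
    · intro h2
      have := (A.R_star (A.star j) y z).mp h2
      rwa [A.star_star] at this
    · intro h2
      exact (A.R_star j z y).mp h2
  rw [hset, Set.ncard_eq_toFinset_card', Set.toFinset_setOf, Finset.card_filter,
    Matrix.mul_apply]
  apply Finset.sum_congr rfl
  intro z _
  rw [adj_apply, adj_apply]
  by_cases h1 : A.R i x z <;> by_cases h2 : A.R j z y <;> simp [h1, h2]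

lemma adj_mul (i j : Fin (d+1)) :
    A.adj i * A.adj j = ∑ l, A.p i j l • A.adj l := by
  ext x y
  obtain ⟨l₀, hl₀, hu⟩ := A.R_partition x y
  rw [A.eval_count hl₀, Matrix.sum_apply]
  simp only [Matrix.smul_apply, adj_apply, smul_eq_mul, mul_ite, mul_one, mul_zero]
  rw [Finset.sum_congr rfl (fun l _ => ?_), Finset.sum_ite_eq' Finset.univ l₀ (A.p i j)]
  · simp
  · congr 1
    · simp only [eq_iff_iff]
      exact ⟨fun hl => hu l hl, fun hl => hl ▸ hl₀⟩

lemma p_symm_star (i j l : Fin (d+1)) :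
    A.p i j l = A.p (A.star j) (A.star i) (A.star l) := by
  obtain ⟨x, y, h⟩ := A.R_nonempty (A.star l)
  have hl : A.R l y x := by
    have := (A.R_star (A.star l) x y).mp h
    rwa [A.star_star] at this
  rw [← A.eval_count hl i j, ← A.eval_count h (A.star j) (A.star i),
    Matrix.mul_apply, Matrix.mul_apply]
  apply Finset.sum_congr rfl
  intro z _
  rw [mul_comm]
  congr 1
  · exact if_congr (A.R_star j z x) rfl rfl
  · exact if_congr (A.R_star i y z) rfl rfl

lemma p_at_zero (i j : Fin (d+1)) :
    A.p i j 0 = if i = A.star j then A.valency i else 0 := by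
  obtain ⟨x⟩ := A.nonemptyX
  have h0 : A.R 0 x x := (A.R_diag x x).mpr rfl
  rw [A.p_count i j 0 x x h0]
  by_cases hij : i = A.star j
  · rw [if_pos hij]
    rw [valency, A.p_count i (A.star i) 0 x x h0, A.star_star]
    congr 1
    ext z
    simp only [Set.mem_setOf_eq, and_congr_right_iff]
    intro _
    rw [← hij]
  · rw [if_neg hij]
    convert Set.ncard_empty X
    ext z
    simp only [Set.mem_setOf_eq, Set.mem_empty_iff_false, iff_false, not_and]
    intro h1 h2
    exact hij (A.R_unique h1 h2)

lemma valency_star (hcomm : A.IsCommutative) (i : Fin (d+1)) :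
    A.valency (A.star i) = A.valency i := by
  rw [valency, valency, A.star_star, hcomm]

lemma valency_pos (i : Fin (d+1)) : 0 < A.valency i := by
  obtain ⟨x, y, h⟩ := A.R_nonempty i
  have h0 : A.R 0 x x := (A.R_diag x x).mpr rfl
  rw [valency, A.p_count i (A.star i) 0 x x h0]
  have hy : y ∈ {z | A.R i x z ∧ A.R (A.star (A.star i)) x z} := by
    refine ⟨h, ?_⟩
    rw [A.star_star]
    exact h
  exact (Set.ncard_pos (Set.toFinite _)).mpr ⟨y, hy⟩

lemma p_right_id (i l : Fin (d+1)) : A.p i 0 l = if i = l then 1 else 0 := by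
  obtain ⟨x, y, h⟩ := A.R_nonempty l
  rw [A.p_count i 0 l x y h, A.star_zero]
  have hset : {z | A.R i x z ∧ A.R 0 y z} = {z | A.R i x z ∧ y = z} := by
    ext z; simp [A.R_diag]
  rw [hset]
  by_cases hil : A.R i x y
  · rw [if_pos (A.R_unique hil h)]
    have : {z | A.R i x z ∧ y = z} = {y} := by
      ext z
      simp only [Set.mem_setOf_eq, Set.mem_singleton_iff]
      constructor
      · rintro ⟨-, rfl⟩; rfl
      · rintro rfl; exact ⟨hil, rfl⟩
    rw [this, Set.ncard_singleton]
  · rw [if_neg (fun hil' => hil (by rw [hil']; exact h))]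
    have : {z | A.R i x z ∧ y = z} = ∅ := by
      ext z
      simp only [Set.mem_setOf_eq, Set.mem_empty_iff_false, iff_false, not_and]
      rintro hz rfl
      exact hil hz
    rw [this, Set.ncard_empty]

lemma triple_eval (a b c : Fin (d+1)) (x₀ : X) :
    ((A.adj a * A.adj b) * A.adj c) x₀ x₀
      = A.p a b (A.star c) * A.valency (A.star c) := by
  have h0 : A.R 0 x₀ x₀ := (A.R_diag _ _).mpr rfl
  rw [A.adj_mul a b, Finset.sum_mul]
  simp only [smul_mul_assoc]
  rw [Matrix.sum_apply]
  simp only [Matrix.smul_apply, smul_eq_mul]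
  calc (∑ γ, A.p a b γ * (A.adj γ * A.adj c) x₀ x₀)
      = ∑ γ, (if γ = A.star c then A.p a b γ * A.valency γ else 0) := by
        apply Finset.sum_congr rfl
        intro γ _
        rw [A.eval_count h0, A.p_at_zero, mul_ite, mul_zero]
    _ = A.p a b (A.star c) * A.valency (A.star c) := by
        rw [Finset.sum_ite_eq' Finset.univ]
        simp

lemma triple_eval' (a b c : Fin (d+1)) (x₀ : X) :
    (A.adj a * (A.adj b * A.adj c)) x₀ x₀
      = A.p b c (A.star a) * A.valency a := by
  have h0 : A.R 0 x₀ x₀ := (A.R_diag _ _).mpr rfl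
  rw [A.adj_mul b c, Finset.mul_sum]
  simp only [mul_smul_comm]
  rw [Matrix.sum_apply]
  simp only [Matrix.smul_apply, smul_eq_mul]
  calc (∑ γ, A.p b c γ * (A.adj a * A.adj γ) x₀ x₀)
      = ∑ γ, (if γ = A.star a then A.p b c γ * A.valency a else 0) := by
        apply Finset.sum_congr rfl
        intro γ _
        rw [A.eval_count h0, A.p_at_zero]
        by_cases hg : γ = A.star a
        · have : a = A.star γ := by rw [hg, A.star_star]
          rw [if_pos hg, if_pos this]
        · have : ¬ a = A.star γ := by
            intro ha
            exact hg (by rw [ha, A.star_star])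
          rw [if_neg hg, if_neg this, mul_zero]
    _ = A.p b c (A.star a) * A.valency a := by
        rw [Finset.sum_ite_eq' Finset.univ]
        simp

lemma triple_id (a b c : Fin (d+1)) :
    A.p a b (A.star c) * A.valency (A.star c) = A.p b c (A.star a) * A.valency a := by
  obtain ⟨x₀⟩ := A.nonemptyX
  rw [← A.triple_eval a b c x₀, ← A.triple_eval' a b c x₀, mul_assoc]

/-- `p α (1*) 1 * k₁ = p 1 1 α * k_α`. -/
lemma sub_id (α : Fin (d+1)) :
    A.p α (A.star 1) 1 * A.valency 1 = A.p 1 1 α * A.valency α := by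
  have h := A.triple_id α (A.star 1) (A.star 1)
  rw [A.star_star] at h
  rw [h, ← A.p_symm_star]

lemma key_eq :
    (∑ α, A.p 1 1 α * (A.p 1 1 α * A.valency α))
      = ∑ β, A.p 1 (A.star 1) β * (A.p 1 β 1 * A.valency 1) := by
  obtain ⟨x₀⟩ := A.nonemptyX
  have assoc : (((A.adj 1 * A.adj 1) * A.adj (A.star 1)) * A.adj (A.star 1)) x₀ x₀
      = ((A.adj 1 * (A.adj 1 * A.adj (A.star 1))) * A.adj (A.star 1)) x₀ x₀ := by
    rw [mul_assoc (A.adj 1) (A.adj 1) (A.adj (A.star 1))]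
  have hA : (((A.adj 1 * A.adj 1) * A.adj (A.star 1)) * A.adj (A.star 1)) x₀ x₀
      = ∑ α, A.p 1 1 α * (A.p 1 1 α * A.valency α) := by
    rw [A.adj_mul 1 1, Finset.sum_mul, Finset.sum_mul]
    simp only [smul_mul_assoc]
    rw [Matrix.sum_apply]
    simp only [Matrix.smul_apply, smul_eq_mul]
    apply Finset.sum_congr rfl
    intro α _
    congr 1
    rw [A.triple_eval α (A.star 1) (A.star 1) x₀, A.star_star, A.sub_id α]
  have hB : ((A.adj 1 * (A.adj 1 * A.adj (A.star 1))) * A.adj (A.star 1)) x₀ x₀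
      = ∑ β, A.p 1 (A.star 1) β * (A.p 1 β 1 * A.valency 1) := by
    rw [A.adj_mul 1 (A.star 1), Finset.mul_sum]
    simp only [mul_smul_comm]
    rw [Finset.sum_mul]
    simp only [smul_mul_assoc]
    rw [Matrix.sum_apply]
    simp only [Matrix.smul_apply, smul_eq_mul]
    apply Finset.sum_congr rfl
    intro β _
    congr 1
    rw [A.triple_eval 1 β (A.star 1) x₀, A.star_star]
  rw [← hA, ← hB, assoc]

end AssocScheme

theorem sum_sq_intersection_numbers
    {X : Type*} [Fintype X] {d : ℕ} (A : AssocScheme X d)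
    (hd : 2 ≤ d)
    (hcomm : A.IsCommutative)
    (hgen : A.Generates 1)
    (hns : A.star 1 ≠ 1)
    (h1a : A.prodIdx 1 1 ⊆ {1, A.star 1, 2})
    (h1b : A.prodIdx 1 (A.star 1) ⊆ {0, 1, A.star 1, 2, A.star 2})
    (h1c : (2 : Fin (d + 1)) ≠ A.star 1 ∧ (2 : Fin (d + 1)) ≠ A.star 2)
    (hk : A.valency 1 = A.valency 2) :
    ∑ α ∈ Finset.univ.filter (fun α : Fin (d + 1) => A.p 1 1 α ≠ 0), (A.p 1 1 α) ^ 2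
      = A.valency 1 +
        2 * ∑ β ∈ ({1, 2} : Finset (Fin (d + 1))).filter
            (fun β => A.p 1 (A.star 1) β ≠ 0), (A.p 1 (A.star 1) β) ^ 2 := by
  classical
  -- numeral facts
  have v1 : ((1 : Fin (d+1)) : ℕ) = 1 := by
    have h : ((1 : Fin (d+1)) : ℕ) = 1 % (d+1) := rfl
    rw [h, Nat.mod_eq_of_lt (by omega)]
  have v2 : ((2 : Fin (d+1)) : ℕ) = 2 := by
    have h : ((2 : Fin (d+1)) : ℕ) = 2 % (d+1) := rfl
    rw [h, Nat.mod_eq_of_lt (by omega)]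
  have n01 : (0 : Fin (d+1)) ≠ 1 := by
    intro h; have := congrArg Fin.val h; rw [v1] at this; simp at this
  have n02 : (0 : Fin (d+1)) ≠ 2 := by
    intro h; have := congrArg Fin.val h; rw [v2] at this; simp at this
  have n12 : (1 : Fin (d+1)) ≠ 2 := by
    intro h; have := congrArg Fin.val h; rw [v1, v2] at this; omega
  have ss1 : A.star (A.star 1) = 1 := A.star_star 1
  have ss2 : A.star (A.star 2) = 2 := A.star_star 2
  have ns1_0 : A.star 1 ≠ 0 := by
    intro h; apply n01; rw [← A.star_zero, ← h, ss1]
  have ns1_2 : A.star 1 ≠ 2 := fun h => h1c.1 h.symm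
  have ns2_0 : A.star 2 ≠ 0 := by
    intro h; apply n02; rw [← A.star_zero, ← h, ss2]
  have ns2_1 : A.star 2 ≠ 1 := by
    intro h; apply h1c.1; rw [← ss2, h]
  have ns2_2 : A.star 2 ≠ 2 := fun h => h1c.2 h.symm
  have ns2_s1 : A.star 2 ≠ A.star 1 := by
    intro h; apply n12; rw [← ss1, ← h, ss2]
  have cancel : ∀ a b : ℕ, a * A.valency 1 = b * A.valency 1 → a = b :=
    fun a b h => Nat.eq_of_mul_eq_mul_right (A.valency_pos 1) h
  -- individual intersection-number identities
  have e111 : A.p 1 1 1 = A.p 1 (A.star 1) 1 := (cancel _ _ (A.sub_id 1)).symm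
  have eqs1 : A.p 1 (A.star 1) (A.star 1) = A.p 1 (A.star 1) 1 := by
    have h := A.p_symm_star 1 (A.star 1) (A.star 1)
    rwa [ss1] at h
  have eqs2 : A.p 1 (A.star 1) (A.star 2) = A.p 1 (A.star 1) 2 := by
    have h := A.p_symm_star 1 (A.star 1) (A.star 2)
    rwa [ss1, ss2] at h
  have e121 : A.p 1 2 1 = A.p 1 (A.star 1) 2 := by
    have h := A.triple_id 2 1 (A.star 1)
    rw [ss1, eqs2, hcomm 2 1 1, ← hk] at h
    exact cancel _ _ h
  have e1s21 : A.p 1 (A.star 2) 1 = A.p 1 (A.star 1) 2 := by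
    have h := A.triple_id (A.star 2) 1 (A.star 1)
    rw [ss1, ss2, A.valency_star hcomm 2, ← hk, hcomm (A.star 2) 1 1] at h
    exact cancel _ _ h
  have q0 : A.p 1 (A.star 1) 0 = A.valency 1 := by
    have h := A.p_at_zero 1 (A.star 1)
    rwa [ss1, if_pos rfl] at h
  have p101 : A.p 1 0 1 = 1 := by rw [A.p_right_id, if_pos rfl]
  -- the master identity
  have hK := A.key_eq
  have hL : (∑ α, A.p 1 1 α * (A.p 1 1 α * A.valency α))
      = (∑ α, A.p 1 1 α ^ 2) * A.valency 1 := by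
    rw [Finset.sum_mul]
    apply Finset.sum_congr rfl
    intro α _
    by_cases hf : A.p 1 1 α = 0
    · simp [hf]
    · have hmem := h1a (show α ∈ A.prodIdx 1 1 from hf)
      simp only [Set.mem_insert_iff, Set.mem_singleton_iff] at hmem
      have hv : A.valency α = A.valency 1 := by
        rcases hmem with h | h | h
        · rw [h]
        · rw [h, A.valency_star hcomm 1]
        · rw [h, ← hk]
      rw [hv, pow_two, mul_assoc]
  have hR : (∑ β, A.p 1 (A.star 1) β * (A.p 1 β 1 * A.valency 1))
      = (∑ β, A.p 1 (A.star 1) β * A.p 1 β 1) * A.valency 1 := by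
    rw [Finset.sum_mul]
    exact Finset.sum_congr rfl fun β _ => (mul_assoc _ _ _).symm
  have main : (∑ α, A.p 1 1 α ^ 2) = ∑ β, A.p 1 (A.star 1) β * A.p 1 β 1 := by
    apply cancel
    rw [← hL, hK, hR]
  -- restrict the β-sum to the five possible indices
  have hS : (∑ β, A.p 1 (A.star 1) β * A.p 1 β 1)
      = ∑ β ∈ ({0, 1, A.star 1, 2, A.star 2} : Finset (Fin (d+1))),
          A.p 1 (A.star 1) β * A.p 1 β 1 := by
    refine (Finset.sum_subset (Finset.subset_univ _) ?_).symm
    intro β _ hβ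
    by_cases hq : A.p 1 (A.star 1) β = 0
    · rw [hq, zero_mul]
    · exfalso
      apply hβ
      have := h1b (show β ∈ A.prodIdx 1 (A.star 1) from hq)
      simp only [Set.mem_insert_iff, Set.mem_singleton_iff] at this
      simp only [Finset.mem_insert, Finset.mem_singleton]
      exact this
  have h₀ : (0 : Fin (d+1)) ∉ ({1, A.star 1, 2, A.star 2} : Finset (Fin (d+1))) := by
    simp only [Finset.mem_insert, Finset.mem_singleton]
    push_neg
    exact ⟨n01, fun h => ns1_0 h.symm, n02, fun h => ns2_0 h.symm⟩
  have h₁ : (1 : Fin (d+1)) ∉ ({A.star 1, 2, A.star 2} : Finset (Fin (d+1))) := by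
    simp only [Finset.mem_insert, Finset.mem_singleton]
    push_neg
    exact ⟨fun h => hns h.symm, n12, fun h => ns2_1 h.symm⟩
  have hs1 : A.star 1 ∉ ({2, A.star 2} : Finset (Fin (d+1))) := by
    simp only [Finset.mem_insert, Finset.mem_singleton]
    push_neg
    exact ⟨ns1_2, fun h => ns2_s1 h.symm⟩
  have h₂ : (2 : Fin (d+1)) ∉ ({A.star 2} : Finset (Fin (d+1))) := by
    simp only [Finset.mem_singleton]
    exact h1c.2
  have hfive : (∑ β ∈ ({0, 1, A.star 1, 2, A.star 2} : Finset (Fin (d+1))),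
        A.p 1 (A.star 1) β * A.p 1 β 1)
      = A.valency 1 + 2 * (A.p 1 (A.star 1) 1 ^ 2 + A.p 1 (A.star 1) 2 ^ 2) := by
    rw [Finset.sum_insert h₀, Finset.sum_insert h₁, Finset.sum_insert hs1,
      Finset.sum_insert h₂, Finset.sum_singleton]
    rw [q0, p101, e111, eqs1, eqs2, e121, e1s21]
    ring
  -- rewrite the filtered sums
  have lhs_eq : (∑ α ∈ Finset.univ.filter (fun α : Fin (d+1) => A.p 1 1 α ≠ 0),
        (A.p 1 1 α) ^ 2) = ∑ α, A.p 1 1 α ^ 2 := by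
    apply Finset.sum_subset (Finset.filter_subset _ _)
    intro x hxu hxf
    have : A.p 1 1 x = 0 := by
      by_contra hne
      exact hxf (Finset.mem_filter.mpr ⟨hxu, hne⟩)
    simp [this]
  have rhs_eq : (∑ β ∈ ({1, 2} : Finset (Fin (d + 1))).filter
        (fun β => A.p 1 (A.star 1) β ≠ 0), (A.p 1 (A.star 1) β) ^ 2)
      = A.p 1 (A.star 1) 1 ^ 2 + A.p 1 (A.star 1) 2 ^ 2 := by
    rw [Finset.sum_filter, Finset.sum_pair n12]
    by_cases hq1 : A.p 1 (A.star 1) 1 = 0 <;>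
      by_cases hq2 : A.p 1 (A.star 1) 2 = 0 <;> simp [hq1, hq2]
  rw [lhs_eq, main, hS, hfive, rhs_eq]
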